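/- arXiv:1401.0171 — 2 statements merged into one kernel-verified Lean document; each statement's English description precedes it below -/
import Mathlib

section
/- Let B be a bipartite graph with parts 𝓡 and W that has a matching saturating 𝓡, let C ⊆ W be the maximal essential subset of W, and let p ∈ C and s ∈ W \ C. Then the singleton {p} is essential in B if and only if {p} is essential in B − s (the graph obtained by deleting the vertex s). -/
/-!
Deleting `s` removes `s` from every neighbourhood and nothing else, so a vertex `R` with
`N(R) = {p}` keeps this neighbourhood in `B − s`. Conversely, if `N_{B−s}(R) = {p}` but `R` is
adjacent to `s` in `B`, then `N(R) = {p, s}`; adding `R` to a set `U` witnessing that `C` is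
essential gives `N(U ∪ {R}) = C ∪ {s}` with `|U ∪ {R}| = |C ∪ {s}|`, contradicting maximality
of `C`.
-/

noncomputable section

attribute [local instance] Classical.propDecidable

variable {ρ ω : Type*}

/-- The neighborhood of a set `U` of left vertices in the bipartite graph
with edge set `E`. -/
def bNbhd (E : Finset (ρ × ω)) (U : Finset ρ) : Finset ω :=
  (E.filter fun p => p.1 ∈ U).image Prod.snd

/-- `C` is an essential subset of the right side: `C = N(U)` for some
`U ⊆ Rset` with `|U| = |C|`. -/
def bEssential (Rset : Finset ρ) (E : Finset (ρ × ω)) (C : Finset ω) : Prop :=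
  ∃ U ⊆ Rset, U.card = C.card ∧ bNbhd E U = C

/-- The bipartite graph with edge set `E` has a matching saturating `Rset`. -/
def SaturatesR (Rset : Finset ρ) (E : Finset (ρ × ω)) : Prop :=
  ∃ f : ρ → ω, Set.InjOn f ↑Rset ∧ ∀ r ∈ Rset, (r, f r) ∈ E

open Finset

lemma mem_bNbhd {E : Finset (ρ × ω)} {U : Finset ρ} {w : ω} :
    w ∈ bNbhd E U ↔ ∃ r ∈ U, (r, w) ∈ E := by
  simp only [bNbhd, mem_image, mem_filter, Prod.exists]
  constructor
  · rintro ⟨r, _, ⟨he, hr⟩, rfl⟩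
    exact ⟨r, hr, he⟩
  · rintro ⟨r, hr, he⟩
    exact ⟨r, w, ⟨he, hr⟩, rfl⟩

lemma bNbhd_mono {E : Finset (ρ × ω)} {U V : Finset ρ} (h : U ⊆ V) :
    bNbhd E U ⊆ bNbhd E V := by
  intro w hw
  obtain ⟨r, hr, he⟩ := mem_bNbhd.1 hw
  exact mem_bNbhd.2 ⟨r, h hr, he⟩

lemma bNbhd_insert (E : Finset (ρ × ω)) (r : ρ) (U : Finset ρ) :
    bNbhd E (insert r U) = bNbhd E {r} ∪ bNbhd E U := by
  ext w
  simp only [mem_bNbhd, mem_union, mem_insert, mem_singleton, or_and_right, exists_or,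
    exists_eq_left]

lemma bNbhd_filter_snd_ne (E : Finset (ρ × ω)) (U : Finset ρ) (s : ω) :
    bNbhd (E.filter fun q => q.2 ≠ s) U = (bNbhd E U).erase s := by
  ext w
  simp only [mem_bNbhd, mem_erase, mem_filter]
  constructor
  · rintro ⟨r, hr, he, hws⟩
    exact ⟨hws, r, hr, he⟩
  · rintro ⟨hws, r, hr, he⟩
    exact ⟨r, hr, he, hws⟩

lemma bEssential_singleton_iff {Rset : Finset ρ} {E : Finset (ρ × ω)} {p : ω} :
    bEssential Rset E {p} ↔ ∃ r ∈ Rset, bNbhd E {r} = {p} := by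
  constructor
  · rintro ⟨U, hU, hcard, hN⟩
    obtain ⟨r, rfl⟩ := card_eq_one.1 (hcard.trans (card_singleton p))
    exact ⟨r, singleton_subset_iff.1 hU, hN⟩
  · rintro ⟨r, hr, hN⟩
    exact ⟨{r}, singleton_subset_iff.2 hr, rfl, hN⟩

lemma bEssential.insert_of_bNbhd_subset {Rset : Finset ρ} {E : Finset (ρ × ω)} {C : Finset ω}
    (hC : bEssential Rset E C) {r : ρ} (hr : r ∈ Rset) {s : ω} (hs : s ∉ C)
    (hsr : s ∈ bNbhd E {r}) (hrC : bNbhd E {r} ⊆ insert s C) :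
    bEssential Rset E (insert s C) := by
  obtain ⟨U, hU, hcard, rfl⟩ := hC
  have hrU : r ∉ U := fun h => hs (bNbhd_mono (singleton_subset_iff.2 h) hsr)
  refine ⟨insert r U, insert_subset hr hU, ?_, ?_⟩
  · rw [card_insert_of_notMem hrU, card_insert_of_notMem hs, hcard]
  · rw [bNbhd_insert]
    exact Subset.antisymm (union_subset hrC (subset_insert _ _))
      (insert_subset (mem_union_left _ hsr) subset_union_right)

theorem essential_singleton_iff_of_delete_superfluous_general
    (Rset : Finset ρ) (E : Finset (ρ × ω))
    (C : Finset ω) (hCess : bEssential Rset E C)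
    (hCmax : ∀ C', bEssential Rset E C' → C' ⊆ C)
    (p : ω) (hp : p ∈ C)
    (s : ω) (hsC : s ∉ C) :
    bEssential Rset E {p} ↔
      bEssential Rset (E.filter fun q => q.2 ≠ s) {p} := by
  have hps : p ≠ s := fun h => hsC (h ▸ hp)
  simp only [bEssential_singleton_iff, bNbhd_filter_snd_ne]
  constructor
  · rintro ⟨r, hr, hN⟩
    exact ⟨r, hr, by rw [hN, erase_eq_of_notMem (notMem_singleton.2 hps.symm)]⟩
  · rintro ⟨r, hr, hN⟩
    have hsr : s ∉ bNbhd E {r} := by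
      intro hsr
      have hrC : bNbhd E {r} ⊆ insert s C := by
        rw [← insert_erase hsr, hN]
        exact insert_subset_insert s (singleton_subset_iff.2 hp)
      exact hsC (hCmax _ (hCess.insert_of_bNbhd_subset hr hsC hsr hrC) (mem_insert_self s C))
    exact ⟨r, hr, by rwa [erase_eq_of_notMem hsr] at hN⟩

/-- Let `C` be the maximal essential subset of `Wset`, `p ∈ C` and
`s ∈ Wset \ C`. Then `{p}` is essential in `B` iff `{p}` is essential in
`B − s`. -/
theorem essential_singleton_iff_of_delete_superfluous
    (Rset : Finset ρ) (Wset : Finset ω) (E : Finset (ρ × ω))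
    (hE : ∀ p ∈ E, p.1 ∈ Rset ∧ p.2 ∈ Wset)
    (hsat : SaturatesR Rset E)
    (C : Finset ω) (hCess : bEssential Rset E C)
    (hCmax : ∀ C', bEssential Rset E C' → C' ⊆ C)
    (p : ω) (hp : p ∈ C)
    (s : ω) (hsW : s ∈ Wset) (hsC : s ∉ C) :
    bEssential Rset E {p} ↔
      bEssential Rset (E.filter fun q => q.2 ≠ s) {p} :=
  essential_singleton_iff_of_delete_superfluous_general Rset E C hCess hCmax p hp s hsC
end
end

section
/- (Monster lemma.) Let H be a 3-partite 3-graph that has a matchable FR-partition (𝓕, 𝓡, W), and let a, b, c ∈ V(H) lie in three different vertex classes. Suppose that (1) for every F ∈ 𝓕 there is an F-edge avoiding {a, b, c}, and (2) for every R ∈ 𝓡 there is an R-edge avoiding {a, b, c}. Then ν(H − {a, b, c}) = ν(H). -/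
noncomputable section

attribute [local instance] Classical.propDecidable

universe u

variable {α : Type u}

/-- A 3-partite 3-uniform multihypergraph: vertex classes `V1, V2, V3` and a
multiset of edges, each edge being a triple with one vertex in each class
(parallel edges are allowed via multiplicities). -/
structure TriSys (α : Type u) where
  V1 : Finset α
  V2 : Finset α
  V3 : Finset α
  h12 : Disjoint V1 V2
  h13 : Disjoint V1 V3
  h23 : Disjoint V2 V3
  edges : Multiset (α × α × α)
  mem1 : ∀ e ∈ edges, e.1 ∈ V1
  mem2 : ∀ e ∈ edges, e.2.1 ∈ V2
  mem3 : ∀ e ∈ edges, e.2.2 ∈ V3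

/-- The vertex set of an edge. -/
def evset (e : α × α × α) : Finset α := {e.1, e.2.1, e.2.2}

/-- The coordinates of an edge, indexed by `Fin 3`. -/
def ecoord (e : α × α × α) : Fin 3 → α := ![e.1, e.2.1, e.2.2]

namespace TriSys

def verts (H : TriSys α) : Finset α := H.V1 ∪ H.V2 ∪ H.V3

/-- The vertex classes, indexed by `Fin 3`. -/
def cls (H : TriSys α) : Fin 3 → Finset α := ![H.V1, H.V2, H.V3]

/-- A matching: a set of (pairwise vertex-disjoint) edges. -/
def IsMatching (H : TriSys α) (M : Finset (α × α × α)) : Prop :=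
  (∀ e ∈ M, e ∈ H.edges) ∧
  (↑M : Set (α × α × α)).Pairwise fun e f => Disjoint (evset e) (evset f)

/-- The matching number ν. -/
def nu (H : TriSys α) : ℕ :=
  sSup {n : ℕ | ∃ M : Finset (α × α × α), H.IsMatching M ∧ M.card = n}

/-- A vertex cover: a set of vertices meeting every edge. -/
def IsCover (H : TriSys α) (T : Finset α) : Prop :=
  ∀ e ∈ H.edges, ∃ v ∈ T, v ∈ evset e

/-- The vertex cover number τ. -/
def tau (H : TriSys α) : ℕ :=
  sInf {n : ℕ | ∃ T : Finset α, H.IsCover T ∧ T.card = n}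

/-- Deletion of a set of vertices (and all edges meeting it). -/
def delete (H : TriSys α) (S : Finset α) : TriSys α where
  V1 := H.V1 \ S
  V2 := H.V2 \ S
  V3 := H.V3 \ S
  h12 := H.h12.mono Finset.sdiff_subset Finset.sdiff_subset
  h13 := H.h13.mono Finset.sdiff_subset Finset.sdiff_subset
  h23 := H.h23.mono Finset.sdiff_subset Finset.sdiff_subset
  edges := H.edges.filter fun e => e.1 ∉ S ∧ e.2.1 ∉ S ∧ e.2.2 ∉ S
  mem1 := fun e he => by
    rw [Multiset.mem_filter] at he
    exact Finset.mem_sdiff.mpr ⟨H.mem1 e he.1, he.2.1⟩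
  mem2 := fun e he => by
    rw [Multiset.mem_filter] at he
    exact Finset.mem_sdiff.mpr ⟨H.mem2 e he.1, he.2.2.1⟩
  mem3 := fun e he => by
    rw [Multiset.mem_filter] at he
    exact Finset.mem_sdiff.mpr ⟨H.mem3 e he.1, he.2.2.2⟩

end TriSys

/-- The four edges of a truncated Fano plane on vertices `a,b,c,x,y,z`
(with classes `{a,x} ⊆ V1`, `{b,y} ⊆ V2`, `{c,z} ⊆ V3`). -/
def FanoEdges (a b c x y z : α) : Finset (α × α × α) :=
  {(a, b, c), (a, y, z), (x, b, z), (x, y, c)}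

/-- The supports of the edges of `H` induced on a vertex subset `F`. -/
def inducedEdges (H : TriSys α) (F : Finset α) : Finset (α × α × α) :=
  (H.edges.filter fun e => evset e ⊆ F).toFinset

/-- `H` induces a truncated multi-Fano plane on the six-element set `F`. -/
def IsMultiFano (H : TriSys α) (F : Finset α) : Prop :=
  ∃ a b c x y z : α,
    a ∈ H.V1 ∧ x ∈ H.V1 ∧ b ∈ H.V2 ∧ y ∈ H.V2 ∧ c ∈ H.V3 ∧ z ∈ H.V3 ∧
    a ≠ x ∧ b ≠ y ∧ c ≠ z ∧
    F = {a, b, c, x, y, z} ∧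
    inducedEdges H F = FanoEdges a b c x y z

/-- The data of an FR-partition: the families `𝓕` and `𝓡` and the set `W`. -/
structure FRData (α : Type u) where
  Ffam : Finset (Finset α)
  Rfam : Finset (Finset α)
  W : Finset α

/-- The union of the members of a family of sets. -/
def famUnion (G : Finset (Finset α)) : Finset α := G.biUnion id

/-- `(𝓕, 𝓡, W)` is an FR-partition of `H`. -/
def IsFRPartition (H : TriSys α) (P : FRData α) : Prop :=
  (∀ A ∈ P.Ffam, ∀ B ∈ P.Ffam, A ≠ B → Disjoint A B) ∧
  (∀ A ∈ P.Rfam, ∀ B ∈ P.Rfam, A ≠ B → Disjoint A B) ∧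
  (∀ A ∈ P.Ffam, ∀ B ∈ P.Rfam, Disjoint A B) ∧
  (∀ A ∈ P.Ffam, Disjoint A P.W) ∧
  (∀ B ∈ P.Rfam, Disjoint B P.W) ∧
  famUnion P.Ffam ∪ famUnion P.Rfam ∪ P.W = H.verts ∧
  (∀ A ∈ P.Ffam, IsMultiFano H A) ∧
  (∀ B ∈ P.Rfam, ∃ r1 ∈ H.V1, ∃ r2 ∈ H.V2, ∃ r3 ∈ H.V3, B = {r1, r2, r3}) ∧
  P.Ffam.card + P.Rfam.card = H.nu

/-- `w` is joined to `R` in the auxiliary bipartite graph `B_i`: some edge of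
`H` contains `w` and two vertices of `R`. -/
def RAdj (H : TriSys α) (R : Finset α) (w : α) : Prop :=
  ∃ e ∈ H.edges, w ∈ evset e ∧ 2 ≤ (evset e ∩ R).card

/-- The auxiliary bipartite graph on `Rfam` and `Wi` has a matching
saturating `Rfam`. -/
def SaturatingR (H : TriSys α) (Rfam : Finset (Finset α)) (Wi : Finset α) : Prop :=
  ∃ f : Finset α → α, Set.InjOn f ↑Rfam ∧ ∀ R ∈ Rfam, f R ∈ Wi ∧ RAdj H R (f R)

/-- Matchability of an FR-partition. -/
def IsMatchable (H : TriSys α) (P : FRData α) : Prop :=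
  ∀ i : Fin 3, SaturatingR H P.Rfam (P.W ∩ H.cls i)

/-- The edge-home property: every edge is an `F`-edge or an `R`-edge. -/
def EdgeHome (H : TriSys α) (P : FRData α) : Prop :=
  ∀ e ∈ H.edges,
    (∃ A ∈ P.Ffam, evset e ⊆ A) ∨ (∃ B ∈ P.Rfam, 2 ≤ (evset e ∩ B).card)

/-- A home-base partition: a matchable FR-partition with the edge-home
property. -/
def IsHomeBasePartition (H : TriSys α) (P : FRData α) : Prop :=
  IsFRPartition H P ∧ IsMatchable H P ∧ EdgeHome H P

/-- A home-base hypergraph: one admitting a home-base partition. -/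
def IsHomeBase (H : TriSys α) : Prop :=
  ∃ P : FRData α, IsHomeBasePartition H P

/-- The neighborhood of a family `U` of `R`'s in the auxiliary bipartite
graph with `W`-side `Wi`. -/
def RNbhd (H : TriSys α) (Wi : Finset α) (U : Finset (Finset α)) : Finset α :=
  Wi.filter fun w => ∃ R ∈ U, RAdj H R w

/-- `C` is an essential subset of `Wi` in the auxiliary bipartite graph:
`C = N(U)` for some `U ⊆ Rfam` with `|U| = |C|`. -/
def EssentialSet (H : TriSys α) (Rfam : Finset (Finset α)) (Wi : Finset α)
    (C : Finset α) : Prop :=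
  ∃ U ⊆ Rfam, U.card = C.card ∧ RNbhd H Wi U = C

/-- `w` is a superfluous vertex of `Wi`: it lies in no essential subset
(equivalently, outside the maximal essential subset). -/
def Superfluous (H : TriSys α) (Rfam : Finset (Finset α)) (Wi : Finset α)
    (w : α) : Prop :=
  w ∈ Wi ∧ ∀ C, EssentialSet H Rfam Wi C → w ∉ C

/-- `w` is a superfluous `W`-vertex of the FR-partition `P` (in its class). -/
def SuperfluousVert (H : TriSys α) (P : FRData α) (w : α) : Prop :=
  ∃ i : Fin 3, Superfluous H P.Rfam (P.W ∩ H.cls i) w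

/-- `v` is an essential `W`-vertex of the FR-partition `P`. -/
def EssentialVertIn (H : TriSys α) (P : FRData α) (v : α) : Prop :=
  ∃ i : Fin 3, EssentialSet H P.Rfam (P.W ∩ H.cls i) {v}

/-- `v` is essential for `R`: it is the unique neighbor of `R` in some `B_i`. -/
def EssentialForIn (H : TriSys α) (P : FRData α) (R : Finset α) (v : α) : Prop :=
  ∃ i : Fin 3, RNbhd H (P.W ∩ H.cls i) {R} = {v}

/-- The neighborhood, inside vertex class `j`, of a set `X` of class-`k`
vertices in the link graph of `H` over the remaining vertex class. -/
def nbr (H : TriSys α) (j k : Fin 3) (X : Finset α) : Finset α :=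
  (H.cls j).filter fun v => ∃ e ∈ H.edges, ecoord e j = v ∧ ecoord e k ∈ X

/-- A cromulent triple `(Y1, Y2, X)` with `Y1 ⊆ V_i`, `Y2 ⊆ V_j`, `X ⊆ V_k`. -/
def IsCromulent (H : TriSys α) (i j k : Fin 3) (Y1 Y2 X : Finset α) : Prop :=
  i ≠ j ∧ i ≠ k ∧ j ≠ k ∧
  Y1.Nonempty ∧ Y2.Nonempty ∧ X.Nonempty ∧
  Y1 ⊆ H.cls i ∧ Y2 ⊆ H.cls j ∧ X ⊆ H.cls k ∧
  Y1.card = Y2.card ∧ Y1.card ≤ X.card ∧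
  nbr H j k X = Y2 ∧
  (∃ M : Finset (α × α × α), H.IsMatching M ∧ M.card = Y1.card ∧
    ∀ e ∈ M, evset e ⊆ Y1 ∪ Y2 ∪ X) ∧
  IsHomeBase (H.delete (Y1 ∪ Y2 ∪ X)) ∧
  (H.delete (Y1 ∪ Y2 ∪ X)).nu + Y1.card = H.nu ∧
  ∀ P : FRData α, IsHomeBasePartition (H.delete (Y1 ∪ Y2 ∪ X)) P →
    nbr H i k X ⊆ Y1 ∪ famUnion P.Rfam ∪ famUnion P.Ffam

/-- A perfectly cromulent triple: condition (5) is strengthened to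
`N_{Lk_{V_j}}(X) = Y1`. -/
def IsPerfCromulent (H : TriSys α) (i j k : Fin 3) (Y1 Y2 X : Finset α) : Prop :=
  i ≠ j ∧ i ≠ k ∧ j ≠ k ∧
  Y1.Nonempty ∧ Y2.Nonempty ∧ X.Nonempty ∧
  Y1 ⊆ H.cls i ∧ Y2 ⊆ H.cls j ∧ X ⊆ H.cls k ∧
  Y1.card = Y2.card ∧ Y1.card ≤ X.card ∧
  nbr H j k X = Y2 ∧
  (∃ M : Finset (α × α × α), H.IsMatching M ∧ M.card = Y1.card ∧
    ∀ e ∈ M, evset e ⊆ Y1 ∪ Y2 ∪ X) ∧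
  IsHomeBase (H.delete (Y1 ∪ Y2 ∪ X)) ∧
  (H.delete (Y1 ∪ Y2 ∪ X)).nu + Y1.card = H.nu ∧
  nbr H i k X = Y1

/-- The link graph of `H` over the class other than `j, k` has a perfect
matching, encoded as a bijection from class `j` onto class `k` realized by
edges of `H`. -/
def LinkPerfectMatching (H : TriSys α) (j k : Fin 3) : Prop :=
  ∃ f : α → α, Set.InjOn f ↑(H.cls j) ∧ (H.cls j).image f = H.cls k ∧
    ∀ v ∈ H.cls j, ∃ e ∈ H.edges, ecoord e j = v ∧ ecoord e k = f v

/-- A proper FR-partition: no `R ∈ 𝓡` together with an edge consisting of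
three `W`-vertices induces a truncated (multi-)Fano plane. -/
def IsProper (H : TriSys α) (P : FRData α) : Prop :=
  ¬ ∃ R ∈ P.Rfam, ∃ e ∈ H.edges, evset e ⊆ P.W ∧ IsMultiFano H (R ∪ evset e)

/-!
For each class `i` fix a matching `f i` of `B_i` saturating `𝓡`. We pick one edge in every home
`A ∈ 𝓕 ∪ 𝓡`, avoiding `{a, b, c}`: an `F`-edge for `F ∈ 𝓕`, and for `R ∈ 𝓡` an edge through
`f i R` and two vertices of `R`, for a suitable class `i`; such an edge lies in
`{f i R} ∪ (R \ V_i)`. These edges are pairwise disjoint because the homes are disjoint and the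
`W`-vertices `f i R` are distinct, so they form a matching of `H − {a, b, c}` of size
`|𝓕| + |𝓡| = ν(H)`.

If every `R` has some `f i R ∉ {a, b, c}`, take for `i` the class of the vertex of
`R ∩ {a, b, c}` (there is at most one, by hypothesis (2)), if any. Otherwise
`{a, b, c} = {f 0 R₀, f 1 R₀, f 2 R₀} ⊆ W` for some `R₀`. Then `R₀` keeps the `R₀`-edge `e₀`
given by (2), which has at most one vertex `w` outside `R₀`, and the other homes choose edges
avoiding `w`: a truncated Fano plane has an edge avoiding any given vertex, and for `R ≠ R₀` some
class `i` has `f i R ≠ w` and `w ∉ R \ V_i`.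
-/

open Finset

lemma card_sdiff_le_one_of_two_le_card_inter {X Y : Finset α} (hX : X.card ≤ 3)
    (hXY : 2 ≤ (X ∩ Y).card) : (X \ Y).card ≤ 1 := by
  have := card_sdiff_add_card_inter X Y
  omega

lemma Set.PairwiseDisjoint.of_subset_union {ι : Type*} {s : Set ι} {A U E : ι → Finset α}
    {W : Finset α} (hA : s.PairwiseDisjoint A) (hU : s.PairwiseDisjoint U)
    (hAW : ∀ i ∈ s, Disjoint (A i) W) (hUW : ∀ i ∈ s, U i ⊆ W)
    (hE : ∀ i ∈ s, E i ⊆ A i ∪ U i) : s.PairwiseDisjoint E := by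
  intro i hi j hj hij
  refine Disjoint.mono (hE i hi) (hE j hj) ?_
  simp only [Finset.disjoint_union_left, Finset.disjoint_union_right]
  exact ⟨⟨hA hi hj hij, ((hAW j hj).mono_right (hUW i hi)).symm⟩,
    (hAW i hi).mono_right (hUW j hj), hU hi hj hij⟩

namespace TriSys

variable {H : TriSys α} {e : α × α × α} {v w : α} {i j : Fin 3}

lemma disjoint_cls (hij : i ≠ j) : Disjoint (H.cls i) (H.cls j) := by
  fin_cases i <;> fin_cases j <;>
    simp_all [cls, H.h12, H.h13, H.h23, H.h12.symm, H.h13.symm, H.h23.symm]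

lemma eq_of_mem_cls (hi : v ∈ H.cls i) (hj : v ∈ H.cls j) : i = j := by
  by_contra hij
  exact disjoint_left.1 (disjoint_cls hij) hi hj

lemma mem_evset_iff : v ∈ evset e ↔ ∃ i, ecoord e i = v := by
  simp [evset, ecoord, Fin.exists_fin_succ, eq_comm]

lemma card_evset_le (e : α × α × α) : (evset e).card ≤ 3 := card_le_three

lemma ecoord_mem_cls (he : e ∈ H.edges) (i : Fin 3) : ecoord e i ∈ H.cls i := by
  fin_cases i
  exacts [H.mem1 e he, H.mem2 e he, H.mem3 e he]

lemma exists_mem_cls_of_mem_evset (he : e ∈ H.edges) (hv : v ∈ evset e) :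
    ∃ i, v ∈ H.cls i := by
  obtain ⟨i, rfl⟩ := mem_evset_iff.1 hv
  exact ⟨i, ecoord_mem_cls he i⟩

lemma eq_of_mem_evset_of_mem_cls (he : e ∈ H.edges) (hv : v ∈ evset e) (hw : w ∈ evset e)
    (hvi : v ∈ H.cls i) (hwi : w ∈ H.cls i) : v = w := by
  obtain ⟨s, rfl⟩ := mem_evset_iff.1 hv
  obtain ⟨t, rfl⟩ := mem_evset_iff.1 hw
  rw [eq_of_mem_cls (ecoord_mem_cls he s) hvi, eq_of_mem_cls (ecoord_mem_cls he t) hwi]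

lemma evset_subset_insert_sdiff_cls {R : Finset α} (he : e ∈ H.edges) (hw : w ∈ evset e)
    (hwR : w ∉ R) (hwi : w ∈ H.cls i) (hR : 2 ≤ (evset e ∩ R).card) :
    evset e ⊆ insert w (R \ H.cls i) := by
  intro v hv
  rcases eq_or_ne v w with rfl | hvw
  · exact mem_insert_self _ _
  have hsub : evset e ∩ R ⊆ (evset e).erase w := fun u hu =>
    mem_erase.2 ⟨fun h => hwR (h ▸ (mem_inter.1 hu).2), (mem_inter.1 hu).1⟩
  have heq : evset e ∩ R = (evset e).erase w := by
    refine eq_of_subset_of_card_le hsub ?_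
    rw [card_erase_of_mem hw]
    have := card_evset_le e
    omega
  have hvR : v ∈ R := (mem_inter.1 (heq ▸ mem_erase.2 ⟨hvw, hv⟩)).2
  exact mem_insert_of_mem <|
    mem_sdiff.2 ⟨hvR, fun hvi => hvw (eq_of_mem_evset_of_mem_cls he hv hw hvi hwi)⟩

def IsPartialTransversal (H : TriSys α) (S : Finset α) : Prop :=
  ∀ s ∈ S, ∃ i, s ∈ H.cls i ∧ ∀ s' ∈ S, s' ∈ H.cls i → s' = s

lemma IsPartialTransversal.exists_eq_of_forall_mem {S : Finset α}
    (hS : H.IsPartialTransversal S) {g : Fin 3 → α} (hgS : ∀ i, g i ∈ S)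
    (hg : ∀ i, g i ∈ H.cls i) : ∀ s ∈ S, ∃ i, g i = s := fun s hs => by
  obtain ⟨i, -, hSi⟩ := hS s hs
  exact ⟨i, hSi _ (hgS i) (hg i)⟩

lemma isPartialTransversal_triple {a b c : α}
    (habc : ∃ i j k : Fin 3, i ≠ j ∧ i ≠ k ∧ j ≠ k ∧ a ∈ H.cls i ∧ b ∈ H.cls j ∧ c ∈ H.cls k) :
    H.IsPartialTransversal {a, b, c} := by
  obtain ⟨i, j, k, hij, hik, hjk, ha, hb, hc⟩ := habc
  have := @eq_of_mem_cls _ H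
  intro s hs
  simp only [mem_insert, mem_singleton] at hs ⊢
  rcases hs with rfl | rfl | rfl
  exacts [⟨i, ha, by grind⟩, ⟨j, hb, by grind⟩, ⟨k, hc, by grind⟩]

lemma card_le_nu {M : Finset (α × α × α)} (hM : H.IsMatching M) : M.card ≤ H.nu := by
  refine le_csSup ⟨H.edges.toFinset.card, ?_⟩ ⟨M, hM, rfl⟩
  rintro n ⟨M, hM, rfl⟩
  exact card_le_card fun e he => Multiset.mem_toFinset.2 (hM.1 e he)

lemma nu_delete_le (S : Finset α) : (H.delete S).nu ≤ H.nu := by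
  refine csSup_le ⟨0, ∅, ⟨by simp, by simp⟩, rfl⟩ ?_
  rintro n ⟨M, hM, rfl⟩
  exact card_le_nu ⟨fun e he => (Multiset.mem_filter.1 (hM.1 e he)).1, hM.2⟩

lemma mem_delete_edges {S : Finset α} (he : e ∈ H.edges) (hS : Disjoint (evset e) S) :
    e ∈ (H.delete S).edges :=
  Multiset.mem_filter.2
    ⟨he, by refine ⟨?_, ?_, ?_⟩ <;> exact disjoint_left.1 hS (by simp [evset])⟩

lemma card_le_nu_delete {ι : Type*} {S : Finset α} (s : Finset ι) (ch : ι → α × α × α)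
    (hch : ∀ i ∈ s, ch i ∈ H.edges ∧ Disjoint (evset (ch i)) S)
    (hdisj : (s : Set ι).PairwiseDisjoint (evset ∘ ch)) : s.card ≤ (H.delete S).nu := by
  have hinj : Set.InjOn ch s := by
    intro i hi j hj hij
    by_contra hne
    have := hdisj hi hj hne
    simp [Function.onFun, hij, evset] at this
  rw [← card_image_of_injOn hinj]
  refine card_le_nu ⟨?_, ?_⟩
  · simp only [mem_image]
    rintro _ ⟨i, hi, rfl⟩
    exact mem_delete_edges (hch i hi).1 (hch i hi).2
  · simp only [coe_image]
    exact hinj.pairwiseDisjoint_image.2 hdisj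

lemma card_insert_le_nu_delete {ι : Type*} [DecidableEq ι] {S : Finset α} {s : Finset ι}
    {i₀ : ι} (hi₀ : i₀ ∉ s) {e₀ : α × α × α} (he₀ : e₀ ∈ H.edges)
    (he₀S : Disjoint (evset e₀) S) (ch : ι → α × α × α)
    (hch : ∀ i ∈ s, ch i ∈ H.edges ∧ Disjoint (evset (ch i)) (S ∪ evset e₀))
    (hdisj : (s : Set ι).PairwiseDisjoint (evset ∘ ch)) :
    (insert i₀ s).card ≤ (H.delete S).nu := by
  have hne : ∀ i ∈ s, i ≠ i₀ := fun i hi h => hi₀ (h ▸ hi)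
  refine card_le_nu_delete _ (Function.update ch i₀ e₀) (fun i hi => ?_) ?_
  · rcases mem_insert.1 hi with rfl | hi
    · simpa using ⟨he₀, he₀S⟩
    · rw [Function.update_of_ne (hne i hi)]
      exact ⟨(hch i hi).1, (hch i hi).2.mono_right subset_union_left⟩
  rw [coe_insert]
  refine Set.PairwiseDisjoint.insert_of_notMem ?_ hi₀ fun i hi => ?_
  · exact hdisj.mono_on fun i hi => by simp [Function.update_of_ne (hne i hi)]
  · simpa [Function.update_of_ne (hne i hi)] using
      ((hch i hi).2.mono_right subset_union_right).symm

end TriSys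

open TriSys

section

variable {H : TriSys α} {P : FRData α} {f : Fin 3 → Finset α → α} {A R R' : Finset α}
  {i j : Fin 3}

lemma IsMultiFano.exists_edge_notMem {F : Finset α} (hF : IsMultiFano H F) (w : α) :
    ∃ e ∈ H.edges, evset e ⊆ F ∧ w ∉ evset e := by
  obtain ⟨a, b, c, x, y, z, ha, hx, hb, hy, hc, hz, hax, hby, hcz, rfl, hind⟩ := hF
  have hedge : ∀ e ∈ FanoEdges a b c x y z, e ∈ H.edges ∧ evset e ⊆ {a, b, c, x, y, z} := by
    intro e he
    rw [← hind, inducedEdges, Multiset.mem_toFinset, Multiset.mem_filter] at he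
    exact he
  by_contra! hall
  have h1 := hall _ (hedge (a, b, c) (by simp [FanoEdges])).1 (hedge _ (by simp [FanoEdges])).2
  have h2 := hall _ (hedge (a, y, z) (by simp [FanoEdges])).1 (hedge _ (by simp [FanoEdges])).2
  have h3 := hall _ (hedge (x, b, z) (by simp [FanoEdges])).1 (hedge _ (by simp [FanoEdges])).2
  have d12 := disjoint_left.1 H.h12
  have d13 := disjoint_left.1 H.h13
  have d23 := disjoint_left.1 H.h23
  simp only [evset, mem_insert, mem_singleton] at h1 h2 h3
  rcases h1 with rfl | rfl | rfl <;> grind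

lemma IsMultiFano.exists_edge_disjoint {F T : Finset α} (hF : IsMultiFano H F)
    (hT : (F ∩ T).card ≤ 1) : ∃ e ∈ H.edges, evset e ⊆ F ∧ Disjoint (evset e) T := by
  obtain ⟨w, hw⟩ : ∃ w, F ∩ T ⊆ {w} := by
    rcases (F ∩ T).eq_empty_or_nonempty with h0 | ⟨w, hw⟩
    · obtain ⟨a, -⟩ := hF
      exact ⟨a, by simp [h0]⟩
    · exact ⟨w, fun v hv => mem_singleton.2 (card_le_one.1 hT v hv w hw)⟩
  obtain ⟨e, he, hsub, hwe⟩ := hF.exists_edge_notMem w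
  refine ⟨e, he, hsub, disjoint_left.2 fun v hv hvT => hwe ?_⟩
  rwa [← mem_singleton.1 (hw (mem_inter.2 ⟨hsub hv, hvT⟩))]

namespace IsFRPartition

lemma pairwiseDisjoint (hFR : IsFRPartition H P) :
    (↑(P.Ffam ∪ P.Rfam) : Set (Finset α)).PairwiseDisjoint id := by
  obtain ⟨hF, hR, hFR, -⟩ := hFR
  intro A hA B hB hAB
  simp only [coe_union, Set.mem_union, mem_coe] at hA hB
  rcases hA with hA | hA <;> rcases hB with hB | hB
  exacts [hF A hA B hB hAB, hFR A hA B hB, (hFR B hB A hA).symm, hR A hA B hB hAB]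

lemma disjoint_W (hFR : IsFRPartition H P) (hA : A ∈ P.Ffam ∪ P.Rfam) : Disjoint A P.W := by
  rcases mem_union.1 hA with hA | hA
  exacts [hFR.2.2.2.1 A hA, hFR.2.2.2.2.1 A hA]

lemma isMultiFano (hFR : IsFRPartition H P) (hA : A ∈ P.Ffam) : IsMultiFano H A :=
  hFR.2.2.2.2.2.2.1 A hA

lemma card_le_three (hFR : IsFRPartition H P) (hR : R ∈ P.Rfam) : R.card ≤ 3 := by
  obtain ⟨_, -, _, -, _, -, rfl⟩ := hFR.2.2.2.2.2.2.2.1 R hR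
  exact Finset.card_le_three

lemma disjoint_Ffam_Rfam (hFR : IsFRPartition H P) : Disjoint P.Ffam P.Rfam := by
  refine disjoint_left.2 fun A hAF hAR => ?_
  obtain ⟨_, -, _, -, _, -, hr⟩ := hFR.2.2.2.2.2.2.2.1 A hAR
  have hA : A = ∅ := disjoint_self.1 (hFR.2.2.1 A hAF A hAR)
  exact insert_ne_empty _ _ (hr.symm.trans hA)

lemma card_union_eq_nu (hFR : IsFRPartition H P) : (P.Ffam ∪ P.Rfam).card = H.nu := by
  rw [card_union_of_disjoint hFR.disjoint_Ffam_Rfam, hFR.2.2.2.2.2.2.2.2]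

lemma card_inter_le_one (hFR : IsFRPartition H P) (hR : R ∈ P.Rfam)
    {e : α × α × α} {S : Finset α} (he : 2 ≤ (evset e ∩ R).card) (hS : Disjoint (evset e) S) :
    (R ∩ S).card ≤ 1 := by
  refine (card_le_card fun v hv => ?_).trans
    (card_sdiff_le_one_of_two_le_card_inter (hFR.card_le_three hR) (by rwa [inter_comm]))
  obtain ⟨hvR, hvS⟩ := mem_inter.1 hv
  exact mem_sdiff.2 ⟨hvR, fun hve => disjoint_left.1 hS hve hvS⟩

end IsFRPartition

/-- `f i` is a matching of `B_i` saturating `𝓡`, for each vertex class `i`. -/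
def IsSaturatingFamily (H : TriSys α) (P : FRData α) (f : Fin 3 → Finset α → α) : Prop :=
  ∀ i, Set.InjOn (f i) ↑P.Rfam ∧ ∀ R ∈ P.Rfam, f i R ∈ P.W ∩ H.cls i ∧ RAdj H R (f i R)

lemma IsMatchable.exists_isSaturatingFamily (hM : IsMatchable H P) :
    ∃ f, IsSaturatingFamily H P f := by
  choose f hf using hM
  exact ⟨f, hf⟩

namespace IsSaturatingFamily

lemma mem_W (hf : IsSaturatingFamily H P f) (hR : R ∈ P.Rfam) (i : Fin 3) : f i R ∈ P.W :=
  (mem_inter.1 ((hf i).2 R hR).1).1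

lemma mem_cls (hf : IsSaturatingFamily H P f) (hR : R ∈ P.Rfam) (i : Fin 3) :
    f i R ∈ H.cls i :=
  (mem_inter.1 ((hf i).2 R hR).1).2

lemma notMem (hf : IsSaturatingFamily H P f) (hFR : IsFRPartition H P) (hR : R ∈ P.Rfam)
    (hA : A ∈ P.Ffam ∪ P.Rfam) (i : Fin 3) : f i R ∉ A := fun h =>
  disjoint_left.1 (hFR.disjoint_W hA) h (hf.mem_W hR i)

lemma eq_of_apply_eq (hf : IsSaturatingFamily H P f) (hR : R ∈ P.Rfam) (hR' : R' ∈ P.Rfam)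
    (h : f i R = f j R') : R = R' := by
  obtain rfl : i = j := eq_of_mem_cls (hf.mem_cls hR i) (h ▸ hf.mem_cls hR' j)
  exact (hf i).1 hR hR' h

lemma exists_edge_disjoint (hf : IsSaturatingFamily H P f) (hFR : IsFRPartition H P)
    (hR : R ∈ P.Rfam) {T : Finset α} (hiT : f i R ∉ T) (hRT : R ∩ T ⊆ H.cls i) :
    ∃ e ∈ H.edges, evset e ⊆ insert (f i R) R ∧ Disjoint (evset e) T := by
  obtain ⟨e, he, hwe, h2⟩ := ((hf i).2 R hR).2
  have hsub := evset_subset_insert_sdiff_cls he hwe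
    (hf.notMem hFR hR (mem_union_right _ hR) i) (hf.mem_cls hR i) h2
  refine ⟨e, he, hsub.trans (insert_subset_insert _ sdiff_subset), disjoint_left.2 ?_⟩
  intro v hv hvT
  rcases mem_insert.1 (hsub hv) with rfl | hv
  · exact hiT hvT
  · exact (mem_sdiff.1 hv).2 (hRT (mem_inter.2 ⟨(mem_sdiff.1 hv).1, hvT⟩))

lemma exists_index_notMem (hf : IsSaturatingFamily H P f)
    (hFR : IsFRPartition H P) (hR : R ∈ P.Rfam) {D : Finset α} (hD : D.card ≤ 1)
    (hDcls : ∀ w ∈ D, ∃ t, w ∈ H.cls t) : ∃ i, f i R ∉ D ∧ R ∩ D ⊆ H.cls i := by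
  rcases (R ∩ D).eq_empty_or_nonempty with h0 | ⟨w, hw⟩
  · have h01 : f 0 R ≠ f 1 R := fun h =>
      absurd (eq_of_mem_cls (hf.mem_cls hR 0) (h ▸ hf.mem_cls hR 1)) (by decide)
    by_cases h : f 0 R ∈ D
    · exact ⟨1, fun h1 => h01 (card_le_one.1 hD _ h _ h1), by simp [h0]⟩
    · exact ⟨0, h, by simp [h0]⟩
  · obtain ⟨hwR, hwD⟩ := mem_inter.1 hw
    obtain ⟨t, hwt⟩ := hDcls w hwD
    refine ⟨t, fun h => hf.notMem hFR hR (mem_union_right _ hR) t ?_, fun v hv => ?_⟩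
    · rwa [card_le_one.1 hD _ h w hwD]
    · rwa [card_le_one.1 hD v (mem_inter.1 hv).2 w hwD]

end IsSaturatingFamily

theorem exists_pairwiseDisjoint_edges [Nonempty α] (hFR : IsFRPartition H P)
    (hf : IsSaturatingFamily H P f) {T : Finset α} {Rs : Finset (Finset α)} (hRs : Rs ⊆ P.Rfam)
    (hFT : ∀ A ∈ P.Ffam, ∃ e ∈ H.edges, evset e ⊆ A ∧ Disjoint (evset e) T)
    (hRT : ∀ R ∈ Rs, ∃ i, f i R ∉ T ∧ R ∩ T ⊆ H.cls i) :
    ∃ ch : Finset α → α × α × α,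
      (∀ A ∈ P.Ffam ∪ Rs, ch A ∈ H.edges ∧ Disjoint (evset (ch A)) T) ∧
      (↑(P.Ffam ∪ Rs) : Set (Finset α)).PairwiseDisjoint (evset ∘ ch) := by
  have hsub : P.Ffam ∪ Rs ⊆ P.Ffam ∪ P.Rfam := union_subset_union_right hRs
  -- An `R`-edge leaves its home only through the `W`-vertex `f i R`.
  have key : ∀ A ∈ P.Ffam ∪ Rs, ∃ e ∈ H.edges, Disjoint (evset e) T ∧
      ∃ i : Fin 3, evset e ⊆ A ∪ (if A ∈ Rs then {f i A} else ∅) := by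
    intro A hA
    by_cases hAR : A ∈ Rs
    · obtain ⟨i, hiT, hRT⟩ := hRT A hAR
      obtain ⟨e, he, heA, hd⟩ := hf.exists_edge_disjoint hFR (hRs hAR) hiT hRT
      exact ⟨e, he, hd, i, by rwa [if_pos hAR, union_comm, ← insert_eq]⟩
    · obtain ⟨e, he, heA, hd⟩ := hFT A (by simpa [hAR] using hA)
      exact ⟨e, he, hd, 0, by simpa [hAR] using heA⟩
  choose! ch hch hT idx hidx using key
  refine ⟨ch, fun A hA => ⟨hch A hA, hT A hA⟩, ?_⟩
  refine Set.PairwiseDisjoint.of_subset_union (W := P.W)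
    (hFR.pairwiseDisjoint.subset (by exact_mod_cast hsub)) ?_
    (fun A hA => hFR.disjoint_W (hsub hA)) (fun A hA => ?_) hidx
  · intro A _ B _ hAB
    simp only [Function.onFun]
    split_ifs with hA hB hB <;> try simp
    exact fun h => hAB (hf.eq_of_apply_eq (hRs hA) (hRs hB) h)
  · split_ifs with hAR
    · exact singleton_subset_iff.2 (hf.mem_W (hRs hAR) _)
    · exact empty_subset _

theorem nu_le_nu_delete_of_forall_exists_notMem [Nonempty α] (hFR : IsFRPartition H P)
    (hf : IsSaturatingFamily H P f) {S : Finset α} (hS : H.IsPartialTransversal S)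
    (hF : ∀ A ∈ P.Ffam, ∃ e ∈ H.edges, evset e ⊆ A ∧ Disjoint (evset e) S)
    (hR : ∀ R ∈ P.Rfam, ∃ e ∈ H.edges, 2 ≤ (evset e ∩ R).card ∧ Disjoint (evset e) S)
    (hfS : ∀ R ∈ P.Rfam, ∃ i, f i R ∉ S) : H.nu ≤ (H.delete S).nu := by
  have hRT : ∀ R ∈ P.Rfam, ∃ i, f i R ∉ S ∧ R ∩ S ⊆ H.cls i := by
    intro R hR'
    obtain ⟨e, -, he, heS⟩ := hR R hR'
    have hRS := hFR.card_inter_le_one hR' he heS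
    rcases (R ∩ S).eq_empty_or_nonempty with h0 | ⟨s, hs⟩
    · obtain ⟨i, hi⟩ := hfS R hR'
      exact ⟨i, hi, by simp [h0]⟩
    · obtain ⟨hsR, hsS⟩ := mem_inter.1 hs
      obtain ⟨t, hst, hSt⟩ := hS s hsS
      refine ⟨t, fun hiS => hf.notMem hFR hR' (mem_union_right _ hR') t ?_, fun v hv => ?_⟩
      · rwa [hSt _ hiS (hf.mem_cls hR' t)]
      · rwa [card_le_one.1 hRS v hv s hs]
  obtain ⟨ch, hch, hdisj⟩ := exists_pairwiseDisjoint_edges hFR hf subset_rfl hF hRT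
  rw [← hFR.card_union_eq_nu]
  exact card_le_nu_delete _ ch hch hdisj

theorem nu_le_nu_delete_of_subset_range [Nonempty α] (hFR : IsFRPartition H P)
    (hf : IsSaturatingFamily H P f) {S R₀ : Finset α} (hR₀ : R₀ ∈ P.Rfam)
    (hSR₀ : ∀ s ∈ S, ∃ i, f i R₀ = s) {e₀ : α × α × α} (he₀ : e₀ ∈ H.edges)
    (he₀R₀ : 2 ≤ (evset e₀ ∩ R₀).card) (he₀S : Disjoint (evset e₀) S) :
    H.nu ≤ (H.delete S).nu := by
  have hSW : S ⊆ P.W := fun s hs => by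
    obtain ⟨i, rfl⟩ := hSR₀ s hs
    exact hf.mem_W hR₀ i
  set D := evset e₀ \ R₀
  have hD : D.card ≤ 1 := card_sdiff_le_one_of_two_le_card_inter (card_evset_le e₀) he₀R₀
  have hAD : ∀ A ∈ P.Ffam ∪ P.Rfam, A ≠ R₀ → A ∩ (S ∪ evset e₀) ⊆ D := by
    intro A hA hne v hv
    obtain ⟨hvA, hvT⟩ := mem_inter.1 hv
    rcases mem_union.1 hvT with hvS | hve
    · exact absurd (hSW hvS) (disjoint_left.1 (hFR.disjoint_W hA) hvA)
    · exact mem_sdiff.2 ⟨hve,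
        disjoint_left.1 (hFR.pairwiseDisjoint hA (mem_union_right _ hR₀) hne) hvA⟩
  have hR₀F : R₀ ∉ P.Ffam := disjoint_right.1 hFR.disjoint_Ffam_Rfam hR₀
  have hFT : ∀ A ∈ P.Ffam, ∃ e ∈ H.edges, evset e ⊆ A ∧ Disjoint (evset e) (S ∪ evset e₀) :=
    fun A hA => (hFR.isMultiFano hA).exists_edge_disjoint <|
      (card_le_card (hAD A (mem_union_left _ hA) (ne_of_mem_of_not_mem hA hR₀F))).trans hD
  have hRT : ∀ R ∈ P.Rfam.erase R₀,
      ∃ i, f i R ∉ S ∪ evset e₀ ∧ R ∩ (S ∪ evset e₀) ⊆ H.cls i := by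
    intro R hR
    obtain ⟨hne, hR⟩ := mem_erase.1 hR
    obtain ⟨i, hiD, hRD⟩ := hf.exists_index_notMem hFR hR hD
      fun w hw => exists_mem_cls_of_mem_evset he₀ (mem_sdiff.1 hw).1
    refine ⟨i, fun h => hiD ?_, fun v hv => hRD (mem_inter.2 ⟨(mem_inter.1 hv).1,
      hAD R (mem_union_right _ hR) hne hv⟩)⟩
    rcases mem_union.1 h with hiS | hie
    · obtain ⟨j, hj⟩ := hSR₀ _ hiS
      exact absurd (hf.eq_of_apply_eq hR₀ hR hj) (Ne.symm hne)
    · exact mem_sdiff.2 ⟨hie, hf.notMem hFR hR (mem_union_right _ hR₀) i⟩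
  obtain ⟨ch, hch, hdisj⟩ := exists_pairwiseDisjoint_edges hFR hf (erase_subset R₀ _) hFT hRT
  have hunion : insert R₀ (P.Ffam ∪ P.Rfam.erase R₀) = P.Ffam ∪ P.Rfam := by
    rw [← union_insert, insert_erase hR₀]
  rw [← hFR.card_union_eq_nu, ← hunion]
  exact card_insert_le_nu_delete (i₀ := R₀) (by simp [hR₀F]) he₀ he₀S ch hch hdisj

end

/-- **The monster lemma.** Let `H` have a matchable FR-partition
`(𝓕, 𝓡, W)` and let `a, b, c` lie in three different vertex classes.
If every `F ∈ 𝓕` has an `F`-edge avoiding `{a, b, c}` and every `R ∈ 𝓡`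
has an `R`-edge avoiding `{a, b, c}`, then `ν(H − {a, b, c}) = ν(H)`. -/
theorem monster_lemma (H : TriSys α) (P : FRData α)
    (hFR : IsFRPartition H P) (hM : IsMatchable H P)
    (a b c : α)
    (habc : ∃ i j k : Fin 3, i ≠ j ∧ i ≠ k ∧ j ≠ k ∧
      a ∈ H.cls i ∧ b ∈ H.cls j ∧ c ∈ H.cls k)
    (hF : ∀ A ∈ P.Ffam, ∃ e ∈ H.edges, evset e ⊆ A ∧
      Disjoint (evset e) ({a, b, c} : Finset α))
    (hR : ∀ B ∈ P.Rfam, ∃ e ∈ H.edges, 2 ≤ (evset e ∩ B).card ∧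
      Disjoint (evset e) ({a, b, c} : Finset α)) :
    (H.delete {a, b, c}).nu = H.nu := by
  have : Nonempty α := ⟨a⟩
  obtain ⟨f, hf⟩ := hM.exists_isSaturatingFamily
  have hS := isPartialTransversal_triple habc
  refine le_antisymm (nu_delete_le _) ?_
  by_cases h : ∃ R₀ ∈ P.Rfam, ∀ i, f i R₀ ∈ ({a, b, c} : Finset α)
  · obtain ⟨R₀, hR₀, hR₀S⟩ := h
    obtain ⟨e₀, he₀, he₀R₀, he₀S⟩ := hR R₀ hR₀
    exact nu_le_nu_delete_of_subset_range hFR hf hR₀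
      (hS.exists_eq_of_forall_mem hR₀S (hf.mem_cls hR₀)) he₀ he₀R₀ he₀S
  · push Not at h
    exact nu_le_nu_delete_of_forall_exists_notMem hFR hf hS hF hR h
end
end
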